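/- Consider the coupled Riccati system θ̇ᴬ = θᴬRᴬθᴬ + θᴬR_Bθᴮ + θᴮR_Bθᴬ - Qᴬ, θ̇ᴮ = θᴮR_Bθᴮ + θᴬRᴬθᴮ + θᴮRᴬθᴬ - Q_B with terminal conditions θᴬ(T) = θᴮ(T) = 0, where Rᴬ = diag(1/rᴬ, 0), R_B = diag(0, 1/r_B), and Qᴬ, Q_B as in the text. If T ≤ (c₁c₂)^{-1/2}·arctan((1+m_A²+m_B²)(c₂/c₁)^{-1/2}) with c₁ = 5√(rᴬ⁻² + r_B⁻²) and c₂ = √(qᴬ² + q_B²)(1 + m_A² + m_B²), then any solution on [0,T] satisfies ‖diag(θᴬ(t), θᴮ(t))‖_F ≤ 1 + m_A² + m_B². -/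

import Mathlib

open Set Real

attribute [local instance] Matrix.frobeniusNormedAddCommGroup Matrix.frobeniusNormedSpace

noncomputable def frobSq {n : ℕ} (M : Matrix (Fin n) (Fin n) ℝ) : ℝ :=
  ∑ i, ∑ j, (M i j) ^ 2

/-!
Reverse time: `f s = (θᴬ (T - s), θᴮ (T - s))`, in the L² product of two Frobenius-normed
matrix spaces, starts at `0`, and submultiplicativity of the Frobenius norm gives
`‖f'‖ ≤ 3ρ‖f‖² + c₂` with `ρ = ‖(Rᴬ, R_B)‖ = c₁ / 5` and `‖(Qᴬ, Q_B)‖ ≤ c₂`.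
The function `B = √(c₂/c₁) tan (√(c₁c₂) s + δ)` solves `B' = c₁ B² + c₂` with `B 0 > 0`; since
`3ρ < c₁`, `‖f‖` can never catch up with `B`. Letting `δ → 0` gives
`‖f s‖ ≤ √(c₂/c₁) tan (√(c₁c₂) s)`, and the hypothesis on `T` makes the right-hand side at most
`1 + m_A² + m_B²`.
-/

noncomputable def riccatiTan (c₁ c₂ δ s : ℝ) : ℝ := √(c₂ / c₁) * tan (√(c₁ * c₂) * s + δ)

section RiccatiComparison

variable {E : Type*} [NormedAddCommGroup E] [NormedSpace ℝ E] {c₁ c₂ : ℝ}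

lemma hasDerivAt_riccatiTan (hc₁ : 0 < c₁) (hc₂ : 0 < c₂) {δ s : ℝ}
    (hcos : cos (√(c₁ * c₂) * s + δ) ≠ 0) :
    HasDerivAt (riccatiTan c₁ c₂ δ) (c₁ * riccatiTan c₁ c₂ δ s ^ 2 + c₂) s := by
  have hinner : HasDerivAt (fun u ↦ √(c₁ * c₂) * u + δ) √(c₁ * c₂) s := by
    simpa using ((hasDerivAt_id s).const_mul √(c₁ * c₂)).add_const δ
  refine (((hasDerivAt_tan hcos).comp s hinner).const_mul √(c₂ / c₁)).congr_deriv ?_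
  have hγω : √(c₂ / c₁) * √(c₁ * c₂) = c₂ := by
    rw [← sqrt_mul (by positivity), show c₂ / c₁ * (c₁ * c₂) = c₂ ^ 2 by field_simp,
      sqrt_sq hc₂.le]
  have hc₁γ : c₁ * √(c₂ / c₁) ^ 2 = c₂ := by
    rw [sq_sqrt (by positivity)]
    field_simp
  have hsec : 1 / cos (√(c₁ * c₂) * s + δ) ^ 2 = 1 + tan (√(c₁ * c₂) * s + δ) ^ 2 := by
    rw [one_div, ← inv_one_add_tan_sq hcos, inv_inv]
  rw [riccatiTan, hsec]
  linear_combination (1 + tan (√(c₁ * c₂) * s + δ) ^ 2) * hγω -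
    tan (√(c₁ * c₂) * s + δ) ^ 2 * hc₁γ

lemma norm_le_riccatiTan (hc₁ : 0 < c₁) (hc₂ : 0 < c₂) {f f' : ℝ → E} {a T δ : ℝ}
    (hf0 : f 0 = 0) (hf : ∀ s ∈ Icc 0 T, HasDerivAt f (f' s) s)
    (hf' : ∀ s ∈ Icc 0 T, ‖f' s‖ ≤ a * ‖f s‖ ^ 2 + c₂) (ha : a < c₁)
    (hδ : 0 < δ) (hδT : √(c₁ * c₂) * T + δ < π / 2) :
    ∀ s ∈ Icc 0 T, ‖f s‖ ≤ riccatiTan c₁ c₂ δ s := by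
  have harg : ∀ s ∈ Icc 0 T, √(c₁ * c₂) * s + δ ∈ Ioo 0 (π / 2) := fun s hs ↦
    ⟨by nlinarith [sqrt_nonneg (c₁ * c₂), hs.1],
      by nlinarith [sqrt_nonneg (c₁ * c₂), hs.2]⟩
  have hB : ∀ s ∈ Icc 0 T,
      HasDerivAt (riccatiTan c₁ c₂ δ) (c₁ * riccatiTan c₁ c₂ δ s ^ 2 + c₂) s := fun s hs ↦
    hasDerivAt_riccatiTan hc₁ hc₂
      (cos_pos_of_mem_Ioo ⟨by linarith [pi_pos, (harg s hs).1], (harg s hs).2⟩).ne'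
  have hB_pos : ∀ s ∈ Icc 0 T, 0 < riccatiTan c₁ c₂ δ s := fun s hs ↦
    mul_pos (sqrt_pos.2 (div_pos hc₂ hc₁))
      (tan_pos_of_pos_of_lt_pi_div_two (harg s hs).1 (harg s hs).2)
  intro s hs
  refine image_norm_le_of_norm_deriv_right_lt_deriv_boundary'
    (fun x hx ↦ (hf x hx).continuousAt.continuousWithinAt)
    (fun x hx ↦ (hf x (Ico_subset_Icc_self hx)).hasDerivWithinAt) ?_
    (fun x hx ↦ (hB x hx).continuousAt.continuousWithinAt)
    (fun x hx ↦ (hB x (Ico_subset_Icc_self hx)).hasDerivWithinAt) ?_ hs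
  · rw [hf0, norm_zero]
    exact (hB_pos 0 (left_mem_Icc.2 (hs.1.trans hs.2))).le
  · intro x hx hfx
    have hx' := Ico_subset_Icc_self hx
    calc ‖f' x‖ ≤ a * ‖f x‖ ^ 2 + c₂ := hf' x hx'
      _ < c₁ * riccatiTan c₁ c₂ δ x ^ 2 + c₂ := by
        rw [hfx]; gcongr; exact pow_pos (hB_pos x hx') 2

lemma norm_le_riccatiTan_zero (hc₁ : 0 < c₁) (hc₂ : 0 < c₂) {f f' : ℝ → E} {a T : ℝ}
    (hf0 : f 0 = 0) (hf : ∀ s ∈ Icc 0 T, HasDerivAt f (f' s) s)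
    (hf' : ∀ s ∈ Icc 0 T, ‖f' s‖ ≤ a * ‖f s‖ ^ 2 + c₂) (ha : a < c₁)
    (hT : √(c₁ * c₂) * T < π / 2) :
    ∀ s ∈ Icc 0 T, ‖f s‖ ≤ riccatiTan c₁ c₂ 0 s := by
  intro s hs
  have hcos : cos (√(c₁ * c₂) * s + 0) ≠ 0 := by
    refine (cos_pos_of_mem_Ioo ⟨?_, ?_⟩).ne' <;>
      nlinarith [pi_pos, sqrt_nonneg (c₁ * c₂), hs.1, hs.2]
  have hcont : ContinuousAt (fun δ ↦ riccatiTan c₁ c₂ δ s) 0 :=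
    continuousAt_const.mul ((continuousAt_tan.2 hcos).comp (by fun_prop))
  refine ge_of_tendsto (hcont.tendsto.mono_left (nhdsWithin_le_nhds (s := Ioi 0))) ?_
  filter_upwards [Ioo_mem_nhdsGT (sub_pos.2 hT)] with δ hδ
  exact norm_le_riccatiTan hc₁ hc₂ hf0 hf hf' ha hδ.1 (by linarith [hδ.2]) s hs

lemma norm_le_of_le_arctan (hc₁ : 0 < c₁) (hc₂ : 0 < c₂) {f f' : ℝ → E} {a T K : ℝ}
    (hf0 : f 0 = 0) (hf : ∀ s ∈ Icc 0 T, HasDerivAt f (f' s) s)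
    (hf' : ∀ s ∈ Icc 0 T, ‖f' s‖ ≤ a * ‖f s‖ ^ 2 + c₂) (ha : a < c₁)
    (hT : T ≤ (√(c₁ * c₂))⁻¹ * arctan (K * (√(c₂ / c₁))⁻¹)) :
    ∀ s ∈ Icc 0 T, ‖f s‖ ≤ K := by
  have hω : 0 < √(c₁ * c₂) := sqrt_pos.2 (mul_pos hc₁ hc₂)
  have hγ : 0 < √(c₂ / c₁) := sqrt_pos.2 (div_pos hc₂ hc₁)
  have hωT : √(c₁ * c₂) * T ≤ arctan (K * (√(c₂ / c₁))⁻¹) := by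
    rwa [← le_inv_mul_iff₀ hω]
  intro s hs
  have hωs : √(c₁ * c₂) * s ≤ arctan (K * (√(c₂ / c₁))⁻¹) :=
    (mul_le_mul_of_nonneg_left hs.2 hω.le).trans hωT
  have htan : tan (√(c₁ * c₂) * s) ≤ K * (√(c₂ / c₁))⁻¹ := by
    rw [← tan_arctan (K * (√(c₂ / c₁))⁻¹)]
    exact strictMonoOn_tan.monotoneOn
      ⟨by nlinarith [pi_pos, hs.1], hωs.trans_lt (arctan_lt_pi_div_two _)⟩
      (arctan_mem_Ioo _) hωs
  calc ‖f s‖ ≤ riccatiTan c₁ c₂ 0 s :=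
        norm_le_riccatiTan_zero hc₁ hc₂ hf0 hf hf' ha
          (hωT.trans_lt (arctan_lt_pi_div_two _)) s hs
    _ ≤ √(c₂ / c₁) * (K * (√(c₂ / c₁))⁻¹) := by
        rw [riccatiTan, add_zero]
        exact mul_le_mul_of_nonneg_left htan hγ.le
    _ = K := by field_simp

end RiccatiComparison

section ProdL2

variable {E F : Type*}

lemma WithLp.norm_toLp_le_add [SeminormedAddCommGroup E] [SeminormedAddCommGroup F]
    {p : ENNReal} [Fact (1 ≤ p)] (x : E) (y : F) :
    ‖WithLp.toLp p (x, y)‖ ≤ ‖x‖ + ‖y‖ :=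
  calc ‖WithLp.toLp p (x, y)‖ = ‖WithLp.toLp p (x, 0) + WithLp.toLp p (0, y)‖ := by
        rw [← WithLp.toLp_add, Prod.mk_add_mk, add_zero, zero_add]
    _ ≤ ‖x‖ + ‖y‖ := by
        simpa only [WithLp.norm_toLp_fst, WithLp.norm_toLp_snd] using
          norm_add_le (WithLp.toLp p (x, (0 : F))) (WithLp.toLp p ((0 : E), y))

lemma HasDerivAt.toLp_prodMk [NormedAddCommGroup E] [NormedSpace ℝ E]
    [NormedAddCommGroup F] [NormedSpace ℝ F] {p : ENNReal} [Fact (1 ≤ p)]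
    {g : ℝ → E} {h : ℝ → F} {g' : E} {h' : F} {t : ℝ}
    (hg : HasDerivAt g g' t) (hh : HasDerivAt h h' t) :
    HasDerivAt (fun s ↦ WithLp.toLp p (g s, h s)) (WithLp.toLp p (g', h')) t :=
  (WithLp.prodContinuousLinearEquiv p ℝ E F).symm.hasFDerivAt.comp_hasDerivAt t (hg.prodMk hh)

end ProdL2

lemma norm_coupled_riccati_le {R : Type*} [NormedRing R] (X Y RA RB QA QB : R) :
    ‖WithLp.toLp 2 (X * RA * X + X * RB * Y + Y * RB * X - QA,
        Y * RB * Y + X * RA * Y + Y * RA * X - QB)‖ ≤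
      3 * ‖WithLp.toLp 2 (RA, RB)‖ * ‖WithLp.toLp 2 (X, Y)‖ ^ 2 + ‖WithLp.toLp 2 (QA, QB)‖ := by
  have hA : ‖X * RA * X + X * RB * Y + Y * RB * X‖ ≤
      ‖X‖ * ‖RA‖ * ‖X‖ + ‖X‖ * ‖RB‖ * ‖Y‖ + ‖Y‖ * ‖RB‖ * ‖X‖ :=
    (norm_add₃_le).trans (by gcongr <;> exact norm_mul₃_le)
  have hB : ‖Y * RB * Y + X * RA * Y + Y * RA * X‖ ≤
      ‖Y‖ * ‖RB‖ * ‖Y‖ + ‖X‖ * ‖RA‖ * ‖Y‖ + ‖Y‖ * ‖RA‖ * ‖X‖ :=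
    (norm_add₃_le).trans (by gcongr <;> exact norm_mul₃_le)
  have hRA : ‖RA‖ ≤ ‖WithLp.toLp 2 (RA, RB)‖ := WithLp.norm_fst_le (x := WithLp.toLp 2 (RA, RB))
  have hRB : ‖RB‖ ≤ ‖WithLp.toLp 2 (RA, RB)‖ := WithLp.norm_snd_le (x := WithLp.toLp 2 (RA, RB))
  have hXY : ‖WithLp.toLp 2 (X, Y)‖ ^ 2 = ‖X‖ ^ 2 + ‖Y‖ ^ 2 :=
    WithLp.prod_norm_sq_eq_of_L2 _
  calc _ = ‖WithLp.toLp 2 (X * RA * X + X * RB * Y + Y * RB * X,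
          Y * RB * Y + X * RA * Y + Y * RA * X) - WithLp.toLp 2 (QA, QB)‖ := rfl
    _ ≤ ‖X * RA * X + X * RB * Y + Y * RB * X‖ + ‖Y * RB * Y + X * RA * Y + Y * RA * X‖ +
          ‖WithLp.toLp 2 (QA, QB)‖ :=
        (norm_sub_le _ _).trans (by gcongr; exact WithLp.norm_toLp_le_add _ _)
    _ ≤ _ := by
        rw [hXY]
        nlinarith [norm_nonneg X, norm_nonneg Y, norm_nonneg RA, norm_nonneg RB,
          mul_le_mul_of_nonneg_left hRA (mul_nonneg (norm_nonneg X) (norm_nonneg Y)),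
          mul_le_mul_of_nonneg_left hRB (mul_nonneg (norm_nonneg X) (norm_nonneg Y)),
          mul_le_mul_of_nonneg_left hRA (sq_nonneg ‖X‖),
          mul_le_mul_of_nonneg_left hRB (sq_nonneg ‖Y‖),
          mul_nonneg (norm_nonneg (WithLp.toLp 2 (RA, RB))) (sq_nonneg (‖X‖ - ‖Y‖))]

lemma sq_norm_eq_frobSq {n : ℕ} (M : Matrix (Fin n) (Fin n) ℝ) : ‖M‖ ^ 2 = frobSq M := by
  rw [Matrix.frobenius_norm_def, ← sqrt_eq_rpow, sq_sqrt (by positivity), frobSq]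
  simp only [rpow_two, norm_eq_abs, sq_abs]

lemma sq_norm_matrix_fin_two (a b c d : ℝ) :
    ‖(!![a, b; c, d] : Matrix (Fin 2) (Fin 2) ℝ)‖ ^ 2 = a ^ 2 + b ^ 2 + c ^ 2 + d ^ 2 := by
  rw [sq_norm_eq_frobSq, frobSq]
  simp [Fin.sum_univ_two, add_assoc]

lemma norm_toLp_control_weights (rA rB : ℝ) :
    ‖WithLp.toLp 2 ((!![1 / rA, 0; 0, 0] : Matrix (Fin 2) (Fin 2) ℝ), !![0, 0; 0, 1 / rB])‖ =
      √(rA⁻¹ ^ 2 + rB⁻¹ ^ 2) := by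
  rw [WithLp.prod_norm_eq_of_L2, WithLp.toLp_fst, WithLp.toLp_snd, sq_norm_matrix_fin_two,
    sq_norm_matrix_fin_two]
  congr 1
  simp

lemma norm_toLp_state_costs_le (qA qB mA mB : ℝ) :
    ‖WithLp.toLp 2 (qA • (!![1, -mA; -mA, mA ^ 2] : Matrix (Fin 2) (Fin 2) ℝ),
        qB • !![mB ^ 2, -mB; -mB, 1])‖ ≤ √(qA ^ 2 + qB ^ 2) * (1 + mA ^ 2 + mB ^ 2) := by
  rw [WithLp.prod_norm_eq_of_L2, WithLp.toLp_fst, WithLp.toLp_snd,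
    ← sqrt_sq (by positivity : (0 : ℝ) ≤ 1 + mA ^ 2 + mB ^ 2),
    ← sqrt_mul (by positivity)]
  refine sqrt_le_sqrt ?_
  simp only [norm_smul, mul_pow, sq_norm_matrix_fin_two, norm_eq_abs, sq_abs]
  have hA : (1 : ℝ) ^ 2 + (-mA) ^ 2 + (-mA) ^ 2 + (mA ^ 2) ^ 2 ≤ (1 + mA ^ 2 + mB ^ 2) ^ 2 := by
    nlinarith [sq_nonneg mA, sq_nonneg mB]
  have hB : (mB ^ 2) ^ 2 + (-mB) ^ 2 + (-mB) ^ 2 + (1 : ℝ) ^ 2 ≤ (1 + mA ^ 2 + mB ^ 2) ^ 2 := by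
    nlinarith [sq_nonneg mA, sq_nonneg mB]
  nlinarith [mul_le_mul_of_nonneg_left hA (sq_nonneg qA),
    mul_le_mul_of_nonneg_left hB (sq_nonneg qB)]

theorem stmt_11_general (qA qB rA rB mA mB T : ℝ)
    (hqA : 0 < qA) (hqB : 0 < qB) (hrA : 0 < rA) (hrB : 0 < rB)
    (QA QB RA RB : Matrix (Fin 2) (Fin 2) ℝ)
    (hQA : QA = qA • !![1, -mA; -mA, mA ^ 2])
    (hQB : QB = qB • !![mB ^ 2, -mB; -mB, 1])
    (hRA : RA = !![1 / rA, 0; 0, 0])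
    (hRB : RB = !![0, 0; 0, 1 / rB])
    (c₁ c₂ : ℝ)
    (hc₁ : c₁ = 5 * Real.sqrt (rA⁻¹ ^ 2 + rB⁻¹ ^ 2))
    (hc₂ : c₂ = Real.sqrt (qA ^ 2 + qB ^ 2) * (1 + mA ^ 2 + mB ^ 2))
    (hT : T ≤ (Real.sqrt (c₁ * c₂))⁻¹ *
      Real.arctan ((1 + mA ^ 2 + mB ^ 2) * (Real.sqrt (c₂ / c₁))⁻¹))
    (θA θB : ℝ → Matrix (Fin 2) (Fin 2) ℝ)
    (hterm : θA T = 0 ∧ θB T = 0)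
    (hderivA : ∀ t ∈ Set.Icc (0 : ℝ) T,
      HasDerivAt θA (θA t * RA * θA t + θA t * RB * θB t + θB t * RB * θA t - QA) t)
    (hderivB : ∀ t ∈ Set.Icc (0 : ℝ) T,
      HasDerivAt θB (θB t * RB * θB t + θA t * RA * θB t + θB t * RA * θA t - QB) t) :
    ∀ t ∈ Set.Icc (0 : ℝ) T,
      Real.sqrt (frobSq (θA t) + frobSq (θB t)) ≤ 1 + mA ^ 2 + mB ^ 2 := by
  subst hQA hQB hRA hRB hc₁ hc₂
  have hρ : 0 < √(rA⁻¹ ^ 2 + rB⁻¹ ^ 2) := by positivity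
  have hrev : ∀ s ∈ Icc 0 T, T - s ∈ Icc 0 T := fun s hs ↦
    ⟨by linarith [hs.2], by linarith [hs.1]⟩
  -- Instance search misses this through the Frobenius instances on the factors.
  have : ContinuousSMul ℝ (WithLp 2 (Matrix (Fin 2) (Fin 2) ℝ × Matrix (Fin 2) (Fin 2) ℝ)) :=
    NormedSpace.toIsBoundedSMul.continuousSMul
  have hf := fun s (hs : s ∈ Icc 0 T) ↦ ((hderivA _ (hrev s hs)).comp_const_sub T s).toLp_prodMk
    (p := 2) ((hderivB _ (hrev s hs)).comp_const_sub T s)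
  intro t ht
  have hbound := norm_le_of_le_arctan (a := 3 * √(rA⁻¹ ^ 2 + rB⁻¹ ^ 2)) (by positivity)
    (by positivity) (by simp [hterm]) hf
    (fun s _ ↦ by
      rw [← Prod.neg_mk, WithLp.toLp_neg, norm_neg]
      let := Matrix.frobeniusNormedRing (α := ℝ) (m := Fin 2)
      refine (norm_coupled_riccati_le _ _ _ _ _ _).trans ?_
      rw [norm_toLp_control_weights]
      gcongr
      exact norm_toLp_state_costs_le qA qB mA mB)
    (by linarith) hT (T - t) (hrev t ht)
  simpa only [WithLp.prod_norm_eq_of_L2, WithLp.toLp_fst, WithLp.toLp_snd, sq_norm_eq_frobSq,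
    sub_sub_cancel] using hbound

/-- A priori bound for the coupled Riccati system: if
T ≤ (c₁c₂)^{-1/2}·arctan((1+m_A²+m_B²)(c₂/c₁)^{-1/2}), then any solution
satisfies ‖diag(θᴬ(t), θᴮ(t))‖_F ≤ 1 + m_A² + m_B². -/
theorem stmt_11 (qA qB rA rB mA mB T : ℝ)
    (hqA : 0 < qA) (hqB : 0 < qB) (hrA : 0 < rA) (hrB : 0 < rB) (hT0 : 0 < T)
    (QA QB RA RB : Matrix (Fin 2) (Fin 2) ℝ)
    (hQA : QA = qA • !![1, -mA; -mA, mA ^ 2])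
    (hQB : QB = qB • !![mB ^ 2, -mB; -mB, 1])
    (hRA : RA = !![1 / rA, 0; 0, 0])
    (hRB : RB = !![0, 0; 0, 1 / rB])
    (c₁ c₂ : ℝ)
    (hc₁ : c₁ = 5 * Real.sqrt (rA⁻¹ ^ 2 + rB⁻¹ ^ 2))
    (hc₂ : c₂ = Real.sqrt (qA ^ 2 + qB ^ 2) * (1 + mA ^ 2 + mB ^ 2))
    (hT : T ≤ (Real.sqrt (c₁ * c₂))⁻¹ *
      Real.arctan ((1 + mA ^ 2 + mB ^ 2) * (Real.sqrt (c₂ / c₁))⁻¹))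
    (θA θB : ℝ → Matrix (Fin 2) (Fin 2) ℝ)
    (hterm : θA T = 0 ∧ θB T = 0)
    (hderivA : ∀ t ∈ Set.Icc (0 : ℝ) T,
      HasDerivAt θA (θA t * RA * θA t + θA t * RB * θB t + θB t * RB * θA t - QA) t)
    (hderivB : ∀ t ∈ Set.Icc (0 : ℝ) T,
      HasDerivAt θB (θB t * RB * θB t + θA t * RA * θB t + θB t * RA * θA t - QB) t) :
    ∀ t ∈ Set.Icc (0 : ℝ) T,
      Real.sqrt (frobSq (θA t) + frobSq (θB t)) ≤ 1 + mA ^ 2 + mB ^ 2 :=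
  stmt_11_general qA qB rA rB mA mB T hqA hqB hrA hrB QA QB RA RB hQA hQB hRA hRB c₁ c₂ hc₁ hc₂ hT
    θA θB hterm hderivA hderivB
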